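/- Let α > 1/2, d ≥ 1, weights γ_u > 0, r(h) = γ_{supp(h)}^{-1} ∏_{j∈supp(h)} |h_j|^α, and μ(λ) = ∑_{h≠0} r(h)^{-1/λ}. For any prime p there exists a vector z* ∈ (Z/pZ)^d such that for all λ ∈ [1/2, α), ∑_{h ∈ Z^d \ {0}, h·z* ≡ 0 mod p} r(h)^{-2} ≤ ((2/p) μ(λ))^{2λ}. -/

import Mathlib

open scoped BigOperators Classical

noncomputable def rK {d : ℕ} (α : ℝ) (γ : Finset (Fin d) → ℝ) (h : Fin d → ℤ) : ℝ :=
  (γ (Finset.univ.filter fun j => h j ≠ 0))⁻¹ *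
    ∏ j ∈ Finset.univ.filter (fun j => h j ≠ 0), (|h j| : ℝ) ^ α

noncomputable def muK {d : ℕ} (α : ℝ) (γ : Finset (Fin d) → ℝ) (lam : ℝ) : ℝ :=
  ∑' h : {h : Fin d → ℤ // h ≠ 0}, rK α γ h.1 ^ (-(1 / lam))

/-!
Average the sums `∑_{h ≠ 0, h·z ≡ 0 (mod p)} r(h)^{-t}` over all `z ∈ (ℤ/pℤ)^d`. A vector
`h ≢ 0 (mod p)` is orthogonal to exactly `p^{d-1}` of the `z`, and the `h ≡ 0 (mod p)` are the
multiples `p • m`, for which `r(p • m)^{-t} ≤ p^{-1} r(m)^{-t}` once `αt ≥ 1`. So the average is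
at most `(2/p) ∑_{h ≠ 0} r(h)^{-t}`, and some `z` does at least as well. For `λ ∈ [1/2, α)` take
`t = 1/λ`; since `2λ ≥ 1`, `∑ a_h^{2λ} ≤ (∑ a_h)^{2λ}` bounds the `t = 2` sum of that `z` by
`((2/p) μ(λ))^{2λ}`, and a minimiser of the `t = 2` sum is therefore good for every `λ` at once.
-/

open Finset

theorem tsum_rpow_le_rpow_tsum {ι : Type*} {f : ι → ℝ} (hf0 : ∀ i, 0 ≤ f i) (hf : Summable f)
    {q : ℝ} (hq : 1 ≤ q) : ∑' i, f i ^ q ≤ (∑' i, f i) ^ q := by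
  set S := ∑' i, f i
  have hle : ∀ i, f i ^ q ≤ S ^ (q - 1) * f i := fun i => by
    calc f i ^ q = f i ^ (q - 1) * f i := by
          rw [← Real.rpow_add_one' (hf0 i) (by linarith), sub_add_cancel]
      _ ≤ S ^ (q - 1) * f i :=
          mul_le_mul_of_nonneg_right
            (Real.rpow_le_rpow (hf0 i) (hf.le_tsum i fun j _ => hf0 j) (by linarith)) (hf0 i)
  have hS : 0 ≤ S := tsum_nonneg hf0
  have hS' : Summable fun i => S ^ (q - 1) * f i := hf.mul_left _
  calc ∑' i, f i ^ q ≤ ∑' i, S ^ (q - 1) * f i :=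
        (hS'.of_nonneg_of_le (fun i => Real.rpow_nonneg (hf0 i) q) hle).tsum_le_tsum hle hS'
    _ = S ^ q := by
        rw [tsum_mul_left, ← Real.rpow_add_one' hS (by linarith), sub_add_cancel]

theorem summable_prod_apply_of_nonneg {ι κ : Type*} [Fintype ι] {g : κ → ℝ} (hg0 : 0 ≤ g)
    (hg : Summable g) : Summable fun x : ι → κ => ∏ i, g (x i) := by
  refine summable_of_sum_le (c := (∑' k, g k) ^ Fintype.card ι)
    (fun x => prod_nonneg fun i _ => hg0 _) fun s => ?_
  calc ∑ x ∈ s, ∏ i, g (x i)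
      ≤ ∑ x ∈ Fintype.piFinset fun i => s.image (· i), ∏ i, g (x i) :=
        sum_le_sum_of_subset_of_nonneg
          (fun x hx => Fintype.mem_piFinset.2 fun i => mem_image_of_mem _ hx)
          (fun x _ _ => prod_nonneg fun i _ => hg0 _)
    _ = ∏ i, ∑ k ∈ s.image (· i), g k := (prod_univ_sum _ _).symm
    _ ≤ ∏ _i : ι, ∑' k, g k :=
        prod_le_prod (fun i _ => sum_nonneg fun k _ => hg0 k)
          fun i _ => hg.sum_le_tsum _ fun k _ => hg0 k
    _ = (∑' k, g k) ^ Fintype.card ι := by rw [prod_const, card_univ]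

theorem card_filter_dotProduct_eq_zero_mul_card {K ι : Type*} [Field K] [Fintype K] [Fintype ι]
    [DecidableEq ι] {c : ι → K} (hc : c ≠ 0) :
    #{z : ι → K | c ⬝ᵥ z = 0} * Fintype.card K = Fintype.card K ^ Fintype.card ι := by
  let f : (ι → K) →+ K :=
    { toFun := (c ⬝ᵥ ·), map_zero' := dotProduct_zero c, map_add' := dotProduct_add c }
  obtain ⟨i, hi⟩ := Function.ne_iff.1 hc
  have hf : f.range = ⊤ := AddMonoidHom.range_eq_top.2 fun a =>
    ⟨Pi.single i (a / c i), by simp [f, dotProduct_single, mul_div_cancel₀ _ hi]⟩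
  have := f.ker.card_mul_index
  rw [AddSubgroup.index_ker, hf] at this
  simpa [Nat.card_eq_fintype_card, Fintype.card_subtype, f] using this

theorem prime_mul_card_filter_sum_mul_eq_zero {ι : Type*} [Fintype ι] [DecidableEq ι] (p : ℕ)
    [Fact p.Prime] (h : ι → ℤ) :
    p * #{z : ι → ZMod p | ∑ j, (h j : ZMod p) * z j = 0} =
      if ∀ j, (p : ℤ) ∣ h j then p ^ (Fintype.card ι + 1) else p ^ Fintype.card ι := by
  split_ifs with hdvd
  · have horth : ∀ z : ι → ZMod p, ∑ j, (h j : ZMod p) * z j = 0 := fun z =>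
      sum_eq_zero fun j _ => by rw [(ZMod.intCast_zmod_eq_zero_iff_dvd _ _).2 (hdvd j), zero_mul]
    rw [filter_true_of_mem fun z _ => horth z, card_univ, Fintype.card_fun, ZMod.card, pow_succ,
      mul_comm]
  · have hc : (fun j => (h j : ZMod p)) ≠ 0 := fun hc =>
      hdvd fun j => (ZMod.intCast_zmod_eq_zero_iff_dvd _ _).1 (congrFun hc j)
    simpa [dotProduct, ZMod.card, mul_comm] using card_filter_dotProduct_eq_zero_mul_card hc

theorem prime_mul_card_filter_mul_le {ι : Type*} [Fintype ι] [DecidableEq ι] (p : ℕ)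
    [Fact p.Prime] {F : (ι → ℤ) → ℝ} (hF0 : ∀ h, 0 ≤ F h) (h : ι → ℤ) :
    p * #{z : ι → ZMod p | h ≠ 0 ∧ ∑ j, (h j : ZMod p) * z j = 0} * F h ≤
      p ^ Fintype.card ι * {h | h ≠ 0}.indicator F h +
        p ^ (Fintype.card ι + 1) * {h | h ≠ 0 ∧ ∀ j, (p : ℤ) ∣ h j}.indicator F h := by
  by_cases h0 : h = 0
  · simp [h0]
  have hN := prime_mul_card_filter_sum_mul_eq_zero p h
  simp only [h0, ne_eq, not_false_eq_true, true_and] at hN ⊢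
  rw [Set.indicator_of_mem (show h ∈ {h | h ≠ 0} from h0), ← Nat.cast_mul, hN]
  split_ifs with hdvd
  · rw [Set.indicator_of_mem (show h ∈ {h | h ≠ 0 ∧ ∀ j, (p : ℤ) ∣ h j} from ⟨h0, hdvd⟩),
      Nat.cast_pow]
    exact le_add_of_nonneg_left (by have := hF0 h; positivity)
  · rw [Set.indicator_of_notMem (fun hD => hdvd hD.2), Nat.cast_pow, mul_zero, add_zero]

theorem sum_tsum_subtype_eq_tsum_card_mul {ι Z : Type*} [Fintype Z] {f : ι → ℝ}
    (hf : Summable f) (P : Z → ι → Prop) [∀ z i, Decidable (P z i)] :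
    ∑ z, ∑' i : {i // P z i}, f i = ∑' i, (#{z | P z i} : ℝ) * f i := by
  refine (sum_congr rfl fun z _ => tsum_subtype {i | P z i} f).trans ?_
  rw [← Summable.tsum_finsetSum fun z _ => hf.indicator _]
  refine tsum_congr fun i => ?_
  simp only [Set.indicator_apply, Set.mem_ofPred_eq, ← sum_filter, sum_const, nsmul_eq_mul]

/-- At `t = 2` this is the squared worst-case error of the rank-1 lattice rule with generating
vector `z`. -/
noncomputable def dualLatticeSum {d p : ℕ} (α : ℝ) (γ : Finset (Fin d) → ℝ) (z : Fin d → ZMod p)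
    (t : ℝ) : ℝ :=
  ∑' h : {h : Fin d → ℤ // h ≠ 0 ∧ ∑ j, (h j : ZMod p) * z j = 0}, rK α γ h.1 ^ (-t)

section Weights

variable {d : ℕ} {α t : ℝ} {γ : Finset (Fin d) → ℝ}

theorem rK_pos (hγ : ∀ u, 0 < γ u) (h : Fin d → ℤ) : 0 < rK α γ h :=
  mul_pos (inv_pos.2 (hγ _)) <| prod_pos fun _ hj =>
    Real.rpow_pos_of_pos (abs_pos.2 (Int.cast_ne_zero.2 (mem_filter.1 hj).2)) α

theorem rK_rpow_neg (hγ : ∀ u, 0 < γ u) (h : Fin d → ℤ) (t : ℝ) :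
    rK α γ h ^ (-t) = γ (univ.filter fun j => h j ≠ 0) ^ t *
      ∏ j ∈ univ.filter (fun j => h j ≠ 0), |(h j : ℝ)| ^ (-(α * t)) := by
  have hpos : ∀ j ∈ univ.filter (fun j => h j ≠ 0), 0 < |(h j : ℝ)| := fun j hj =>
    abs_pos.2 (Int.cast_ne_zero.2 (mem_filter.1 hj).2)
  rw [rK, Real.mul_rpow (inv_nonneg.2 (hγ _).le) (prod_nonneg fun j hj =>
      (Real.rpow_pos_of_pos (hpos j hj) α).le), Real.inv_rpow (hγ _).le, Real.rpow_neg (hγ _).le,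
    inv_inv, ← Real.finsetProd_rpow _ _ fun j hj => (Real.rpow_pos_of_pos (hpos j hj) α).le]
  congr 1
  refine prod_congr rfl fun j hj => ?_
  rw [← Real.rpow_mul (hpos j hj).le, neg_mul_eq_mul_neg]

theorem summable_rK_rpow_neg (hγ : ∀ u, 0 < γ u) (ht : 1 < α * t) :
    Summable fun h : Fin d → ℤ => rK α γ h ^ (-t) := by
  set g : ℤ → ℝ := fun k => if k ≠ 0 then |(k : ℝ)| ^ (-(α * t)) else 1
  have hg : Summable g := ((Real.summable_abs_int_rpow ht).update 0 1).congr fun k => by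
    by_cases hk : k = 0 <;> simp [g, hk]
  have hg0 : 0 ≤ g := fun k => by
    by_cases hk : k = 0 <;> simp only [g, hk, ne_eq] <;> positivity
  refine Summable.of_nonneg_of_le (fun h => (Real.rpow_pos_of_pos (rK_pos hγ h) _).le)
    (fun h => ?_) ((summable_prod_apply_of_nonneg hg0 hg).mul_left (∑ u, γ u ^ t))
  rw [rK_rpow_neg hγ, prod_filter]
  exact mul_le_mul_of_nonneg_right
    (single_le_sum (fun u _ => (Real.rpow_pos_of_pos (hγ u) t).le) (mem_univ _))
    (prod_nonneg fun j _ => hg0 _)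

theorem rK_zsmul_rpow_neg (hγ : ∀ u, 0 < γ u) {n : ℤ} (hn : n ≠ 0) (h : Fin d → ℤ) (t : ℝ) :
    rK α γ (n • h) ^ (-t) =
      (|(n : ℝ)| ^ (-(α * t))) ^ #(univ.filter fun j => h j ≠ 0) * rK α γ h ^ (-t) := by
  have hsupp : (univ.filter fun j => (n • h) j ≠ 0) = univ.filter fun j => h j ≠ 0 := by
    simp [hn]
  rw [rK_rpow_neg hγ, rK_rpow_neg hγ, hsupp, ← prod_const, mul_left_comm, ← prod_mul_distrib]
  congr 2 with j
  rw [Pi.smul_apply, smul_eq_mul, Int.cast_mul, abs_mul,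
    Real.mul_rpow (abs_nonneg _) (abs_nonneg _)]

theorem rK_zsmul_rpow_neg_le (hγ : ∀ u, 0 < γ u) (ht : 1 ≤ α * t) {n : ℤ} (hn : n ≠ 0)
    {h : Fin d → ℤ} (h0 : h ≠ 0) : rK α γ (n • h) ^ (-t) ≤ |(n : ℝ)|⁻¹ * rK α γ h ^ (-t) := by
  have hn1 : (1 : ℝ) ≤ |(n : ℝ)| := by rw [← Int.cast_abs]; exact_mod_cast Int.one_le_abs hn
  have hsupp : #(univ.filter fun j => h j ≠ 0) ≠ 0 := by
    obtain ⟨j, hj⟩ := Function.ne_iff.1 h0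
    exact card_ne_zero_of_mem (mem_filter.2 ⟨mem_univ j, hj⟩)
  rw [rK_zsmul_rpow_neg hγ hn]
  refine mul_le_mul_of_nonneg_right ?_ (Real.rpow_pos_of_pos (rK_pos hγ h) _).le
  calc (|(n : ℝ)| ^ (-(α * t))) ^ #(univ.filter fun j => h j ≠ 0)
      ≤ |(n : ℝ)| ^ (-(α * t)) :=
        pow_le_of_le_one (by positivity) (Real.rpow_le_one_of_one_le_of_nonpos hn1 (by linarith))
          hsupp
    _ ≤ |(n : ℝ)| ^ (-1 : ℝ) := Real.rpow_le_rpow_of_exponent_le hn1 (by linarith)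
    _ = |(n : ℝ)|⁻¹ := Real.rpow_neg_one _

theorem tsum_rK_rpow_neg_dvd_le (hγ : ∀ u, 0 < γ u) (ht : 1 < α * t) {n : ℤ} (hn : n ≠ 0) :
    ∑' h : ({h : Fin d → ℤ | h ≠ 0 ∧ ∀ j, n ∣ h j} : Set _), rK α γ h ^ (-t) ≤
      |(n : ℝ)|⁻¹ * ∑' h : ({h : Fin d → ℤ | h ≠ 0} : Set _), rK α γ h ^ (-t) := by
  have hinj : Function.Injective fun h : Fin d → ℤ => n • h := smul_right_injective _ hn
  have himage : {h : Fin d → ℤ | h ≠ 0 ∧ ∀ j, n ∣ h j} = (n • ·) '' {h | h ≠ 0} := by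
    ext h
    refine ⟨fun ⟨h0, hdvd⟩ => ?_, ?_⟩
    · have hdiv : n • (fun j => h j / n) = h := funext fun j => Int.mul_ediv_cancel' (hdvd j)
      exact ⟨_, fun h' => h0 (by rw [← hdiv, h', smul_zero]), hdiv⟩
    · rintro ⟨m, hm, rfl⟩
      exact ⟨smul_ne_zero hn hm, fun j => dvd_mul_right n (m j)⟩
  have hs := (summable_rK_rpow_neg hγ ht).subtype {h : Fin d → ℤ | h ≠ 0}
  have hle : ∀ m : ({h : Fin d → ℤ | h ≠ 0} : Set _),
      rK α γ (n • m.1) ^ (-t) ≤ |(n : ℝ)|⁻¹ * rK α γ m ^ (-t) :=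
    fun m => rK_zsmul_rpow_neg_le hγ ht.le hn m.2
  rw [himage, tsum_image (fun h => rK α γ h ^ (-t)) hinj.injOn, ← tsum_mul_left]
  exact ((hs.mul_left _).of_nonneg_of_le (fun m => (Real.rpow_pos_of_pos (rK_pos hγ _) _).le)
    hle).tsum_le_tsum hle (hs.mul_left _)

theorem dualLatticeSum_mul_le_rpow (hγ : ∀ u, 0 < γ u) (ht : 1 < α * t) {q : ℝ} (hq : 1 ≤ q)
    {p : ℕ} (z : Fin d → ZMod p) :
    dualLatticeSum α γ z (q * t) ≤ dualLatticeSum α γ z t ^ q := by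
  have hpow : ∀ h, rK α γ h ^ (-(q * t)) = (rK α γ h ^ (-t)) ^ q := fun h => by
    rw [← Real.rpow_mul (rK_pos hγ h).le, neg_mul, mul_comm]
  simp only [dualLatticeSum, hpow]
  exact tsum_rpow_le_rpow_tsum (fun h => (Real.rpow_pos_of_pos (rK_pos hγ _) _).le)
    ((summable_rK_rpow_neg hγ ht).subtype _) hq

theorem prime_mul_sum_dualLatticeSum_le (hγ : ∀ u, 0 < γ u) (ht : 1 < α * t) (p : ℕ)
    [Fact p.Prime] :
    p * ∑ z : Fin d → ZMod p, dualLatticeSum α γ z t ≤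
      2 * p ^ d * ∑' h : {h : Fin d → ℤ // h ≠ 0}, rK α γ h ^ (-t) := by
  have hp : p.Prime := Fact.out
  set F := fun h : Fin d → ℤ => rK α γ h ^ (-t)
  have hF : Summable F := summable_rK_rpow_neg hγ ht
  have hF0 : ∀ h, 0 ≤ F h := fun h => (Real.rpow_pos_of_pos (rK_pos hγ h) _).le
  set T : Set (Fin d → ℤ) := {h | h ≠ 0}
  set D : Set (Fin d → ℤ) := {h | h ≠ 0 ∧ ∀ j, (p : ℤ) ∣ h j}
  set M := ∑' h : T, F h
  have hD : ∑' h : D, F h ≤ (p : ℝ)⁻¹ * M := by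
    simpa using tsum_rK_rpow_neg_dvd_le hγ ht (n := p) (by exact_mod_cast hp.ne_zero)
  have hcount : ∀ h, p * #{z : Fin d → ZMod p | h ≠ 0 ∧ ∑ j, (h j : ZMod p) * z j = 0} * F h ≤
      p ^ d * T.indicator F h + p ^ (d + 1) * D.indicator F h := fun h => by
    simpa only [Fintype.card_fin] using prime_mul_card_filter_mul_le p hF0 h
  have hsR : Summable fun h => p ^ d * T.indicator F h + p ^ (d + 1) * D.indicator F h :=
    ((hF.indicator T).mul_left _).add ((hF.indicator D).mul_left _)
  have hsL := hsR.of_nonneg_of_le (fun h => by have := hF0 h; positivity) hcount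
  calc p * ∑ z, dualLatticeSum α γ z t
      = p * ∑' h, (#{z : Fin d → ZMod p | h ≠ 0 ∧ ∑ j, (h j : ZMod p) * z j = 0} : ℝ) * F h :=
        congrArg _ (sum_tsum_subtype_eq_tsum_card_mul hF
          fun (z : Fin d → ZMod p) (h : Fin d → ℤ) => h ≠ 0 ∧ ∑ j, (h j : ZMod p) * z j = 0)
    _ = ∑' h, p * #{z : Fin d → ZMod p | h ≠ 0 ∧ ∑ j, (h j : ZMod p) * z j = 0} * F h := by
        rw [← tsum_mul_left]
        simp only [mul_assoc]
    _ ≤ ∑' h, (p ^ d * T.indicator F h + p ^ (d + 1) * D.indicator F h) :=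
        hsL.tsum_le_tsum hcount hsR
    _ = p ^ d * M + p ^ (d + 1) * ∑' h : D, F h := by
        rw [((hF.indicator T).mul_left _).tsum_add ((hF.indicator D).mul_left _), tsum_mul_left,
          tsum_mul_left, _root_.tsum_subtype D F, ← _root_.tsum_subtype T F]
    _ ≤ p ^ d * M + p ^ (d + 1) * ((p : ℝ)⁻¹ * M) := by gcongr
    _ = 2 * p ^ d * M := by
        field_simp [hp.ne_zero]
        ring

theorem exists_dualLatticeSum_le (hγ : ∀ u, 0 < γ u) (ht : 1 < α * t) (p : ℕ) [Fact p.Prime] :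
    ∃ z : Fin d → ZMod p, dualLatticeSum α γ z t ≤
      2 / p * ∑' h : {h : Fin d → ℤ // h ≠ 0}, rK α γ h ^ (-t) := by
  have hp0 : (0 : ℝ) < p := by exact_mod_cast (Fact.out : p.Prime).pos
  have hsum : ∑ z : Fin d → ZMod p, p * dualLatticeSum α γ z t ≤
      ∑ _z : Fin d → ZMod p, 2 * ∑' h : {h : Fin d → ℤ // h ≠ 0}, rK α γ h ^ (-t) := by
    rw [← mul_sum, sum_const, card_univ, Fintype.card_fun, ZMod.card, Fintype.card_fin,
      nsmul_eq_mul, Nat.cast_pow, ← mul_assoc, mul_comm _ (2 : ℝ)]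
    exact prime_mul_sum_dualLatticeSum_le hγ ht p
  obtain ⟨z, -, hz⟩ := exists_le_of_sum_le univ_nonempty hsum
  refine ⟨z, ?_⟩
  rw [div_mul_eq_mul_div, le_div_iff₀ hp0, mul_comm]
  exact hz

end Weights

theorem stmt8_general (d : ℕ) (α : ℝ)
    (γ : Finset (Fin d) → ℝ) (hγ : ∀ u, 0 < γ u)
    (p : ℕ) [Fact p.Prime] :
    ∃ z : Fin d → ZMod p, ∀ lam : ℝ, 1 / 2 ≤ lam → lam < α →
      (∑' h : {h : Fin d → ℤ // h ≠ 0 ∧ ∑ j, ((h j : ZMod p) * z j) = 0},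
          rK α γ h.1 ^ (-2 : ℝ)) ≤
        ((2 / (p : ℝ)) * muK α γ lam) ^ (2 * lam) := by
  obtain ⟨z, hz⟩ := Finite.exists_min fun z : Fin d → ZMod p => dualLatticeSum α γ z 2
  refine ⟨z, fun lam hlam hlamα => ?_⟩
  have hlam0 : 0 < lam := by linarith
  have ht : 1 < α * (1 / lam) := by rwa [mul_one_div, one_lt_div hlam0]
  obtain ⟨w, hw⟩ := exists_dualLatticeSum_le hγ ht p
  calc dualLatticeSum α γ z 2 ≤ dualLatticeSum α γ w 2 := hz w
    _ = dualLatticeSum α γ w (2 * lam * (1 / lam)) := by field_simp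
    _ ≤ dualLatticeSum α γ w (1 / lam) ^ (2 * lam) :=
        dualLatticeSum_mul_le_rpow hγ ht (by linarith) w
    _ ≤ (2 / p * muK α γ lam) ^ (2 * lam) := by
        gcongr
        · exact tsum_nonneg fun h => (Real.rpow_pos_of_pos (rK_pos hγ _) _).le
        · exact hw

theorem stmt8 (d : ℕ) (hd : 1 ≤ d) (α : ℝ) (hα : 1 / 2 < α)
    (γ : Finset (Fin d) → ℝ) (hγ : ∀ u, 0 < γ u)
    (p : ℕ) [Fact p.Prime] :
    ∃ z : Fin d → ZMod p, ∀ lam : ℝ, 1 / 2 ≤ lam → lam < α →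
      (∑' h : {h : Fin d → ℤ // h ≠ 0 ∧ ∑ j, ((h j : ZMod p) * z j) = 0},
          rK α γ h.1 ^ (-2 : ℝ)) ≤
        ((2 / (p : ℝ)) * muK α γ lam) ^ (2 * lam) :=
  stmt8_general d α γ hγ p
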